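/- arXiv:1411.8000 — 2 statements merged into one kernel-verified Lean document; each statement's English description precedes it below -/
import Mathlib

section
/- Let f:[0,T]→ℝ be a continuous function, extended to ℝ by f(s):=f(0) for s<0 and f(s):=f(T) for s>T. Assume f has a (deterministic) quadratic variation: there is a continuous nondecreasing function [f]:[0,T]→ℝ with [f](0)=0 such that for every x∈[0,T], (1/ε)∫_0^x (f(s+ε)−f(s))^2 ds → [f](x) as ε→0⁺. Let F∈C^{1,2}([0,T]×ℝ;ℝ). Then for every t∈[0,T] the limit lim_{ε→0⁺} ∫_0^t ∂_x F(s,f(s)) (f(s+ε)−f(s))/ε ds exists and equals F(t,f(t)) − F(0,f(0)) − ∫_0^t ∂_t F(s,f(s)) ds − (1/2)∫_0^t ∂^2_{xx}F(s,f(s)) d[f](s), where the last integral is the Lebesgue–Stieltjes integral with respect to the continuous nondecreasing function [f]. -/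
/-!
Put `g s := F (max 0 (min s T)) (f s)`; clamping the time makes `g` continuous on all of `ℝ`,
and `(1/ε) ∫₀ᵗ (g (s + ε) - g s) ds → g t - g 0`. For `s ∈ [0, t]` the increment of `g` splits
into a time increment, whose quotient by `ε` converges boundedly to `∂ₜF (s, f s)` (dominated
convergence), and a space increment, which Taylor's formula writes as
`∂ₓF Δ + ½ ∂²ₓₓF Δ² + o(Δ²)` with `Δ = f (s + ε) - f s`, uniformly in `s`. The first term is the
forward integrand. The measures `Δ² / ε ds` have distribution functions converging to `[f]`, so,
comparing both sides with Riemann–Stieltjes sums, their integrals of the continuous function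
`∂²ₓₓF (s, f s)` converge to the `d[f]`-integral; their bounded mass makes the `o(Δ²) / ε` term
negligible.
-/

open MeasureTheory Filter Topology Set

theorem tendsto_of_forall_pos_eventually_abs_sub_le {ι : Type*} {l : Filter ι} {X : ι → ℝ}
    {L C : ℝ} (h : ∀ δ > 0, ∀ᶠ i in l, |X i - L| ≤ C * δ) : Tendsto X l (𝓝 L) := by
  rw [Metric.tendsto_nhds]
  intro η hη
  have hC : 0 < |C| + 1 := by positivity
  filter_upwards [h (η / (|C| + 1)) (by positivity)] with i hi
  calc dist (X i) L ≤ C * (η / (|C| + 1)) := hi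
    _ ≤ |C| * (η / (|C| + 1)) := by gcongr; exact le_abs_self C
    _ < η := by rw [mul_div_assoc', div_lt_iff₀ hC]; nlinarith

theorem ContinuousOn.comp_uncurry_prodMk {G : ℝ → ℝ → ℝ} {K S : Set ℝ} {u v : ℝ → ℝ}
    (hG : ContinuousOn (fun p : ℝ × ℝ => G p.1 p.2) (K ×ˢ univ)) (hu : ContinuousOn u S)
    (hv : Continuous v) (huS : MapsTo u S K) : ContinuousOn (fun s => G (u s) (v s)) S :=
  hG.comp (hu.prodMk hv.continuousOn) fun _ hs => ⟨huS hs, mem_univ _⟩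

theorem abs_sub_sub_mul_le_of_hasDerivWithinAt {g g' : ℝ → ℝ} {y z c δ : ℝ}
    (hg : ∀ v ∈ uIcc y z, HasDerivWithinAt g (g' v) (uIcc y z) v)
    (hbound : ∀ v ∈ uIcc y z, |g' v - c| ≤ δ) :
    |g z - g y - c * (z - y)| ≤ δ * |z - y| := by
  have hder : ∀ v ∈ uIcc y z, HasDerivWithinAt (fun v => g v - c * v) (g' v - c) (uIcc y z) v :=
    fun v hv => (hg v hv).sub (by simpa using (hasDerivWithinAt_id v _).const_mul c)
  have := (convex_uIcc y z).norm_image_sub_le_of_norm_hasDerivWithin_le hder hbound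
    left_mem_uIcc right_mem_uIcc
  simp only [Real.norm_eq_abs] at this
  convert this using 2
  ring

theorem abs_taylor_remainder_two_le {g g' g'' : ℝ → ℝ} {y z δ : ℝ}
    (hg : ∀ v ∈ uIcc y z, HasDerivAt g (g' v) v)
    (hg' : ∀ v ∈ uIcc y z, HasDerivAt g' (g'' v) v)
    (hbound : ∀ v ∈ uIcc y z, |g'' v - g'' y| ≤ δ) :
    |g z - g y - g' y * (z - y) - 1 / 2 * g'' y * (z - y) ^ 2| ≤ δ * (z - y) ^ 2 := by
  set h : ℝ → ℝ := fun v => g v - g' y * v - 1 / 2 * g'' y * (v - y) ^ 2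
  have hder : ∀ v ∈ uIcc y z,
      HasDerivWithinAt h (g' v - g' y - g'' y * (v - y)) (uIcc y z) v := by
    intro v hv
    have := ((hg v hv).sub ((hasDerivAt_id v).const_mul (g' y))).sub
      ((((hasDerivAt_id v).sub_const y).pow 2).const_mul (1 / 2 * g'' y))
    exact (this.congr_deriv (by simp; ring)).hasDerivWithinAt
  have hδ : 0 ≤ δ := (abs_nonneg _).trans (hbound y left_mem_uIcc)
  have hder_bound : ∀ v ∈ uIcc y z, ‖g' v - g' y - g'' y * (v - y)‖ ≤ δ * |z - y| := by
    intro v hv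
    have hsub : uIcc y v ⊆ uIcc y z := uIcc_subset_uIcc_left hv
    calc ‖g' v - g' y - g'' y * (v - y)‖ ≤ δ * |v - y| :=
          abs_sub_sub_mul_le_of_hasDerivWithinAt
            (fun u hu => (hg' u (hsub hu)).hasDerivWithinAt) (fun u hu => hbound u (hsub hu))
      _ ≤ δ * |z - y| := mul_le_mul_of_nonneg_left (abs_sub_left_of_mem_uIcc hv) hδ
  calc _ = ‖h z - h y‖ := by simp only [h, Real.norm_eq_abs]; ring_nf
    _ ≤ δ * |z - y| * ‖z - y‖ :=
      (convex_uIcc y z).norm_image_sub_le_of_norm_hasDerivWithin_le hder hder_bound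
        left_mem_uIcc right_mem_uIcc
    _ = δ * (z - y) ^ 2 := by rw [Real.norm_eq_abs, mul_assoc, ← abs_mul, ← sq, abs_sq]

theorem tendsto_integral_sub_comp_add_div {g : ℝ → ℝ} (hg : Continuous g) (a b : ℝ) :
    Tendsto (fun ε => (∫ s in a..b, (g (s + ε) - g s)) / ε) (𝓝[>] 0) (𝓝 (g b - g a)) := by
  set G : ℝ → ℝ := fun u => ∫ s in a..u, g s
  have hG : ∀ u, HasDerivAt G (g u) u := fun u => (hg.integral_hasStrictDerivAt a u).hasDerivAt
  have hI : ∀ u v, IntervalIntegrable g volume u v := hg.intervalIntegrable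
  have key : ∀ ε, (∫ s in a..b, (g (s + ε) - g s)) / ε
      = ε⁻¹ • (G (b + ε) - G b) - ε⁻¹ • (G (a + ε) - G a) := by
    intro ε
    rw [intervalIntegral.integral_sub (f := fun s => g (s + ε))
        ((hg.comp (continuous_add_const ε)).intervalIntegrable _ _) (hI a b),
      intervalIntegral.integral_comp_add_right g ε,
      ← intervalIntegral.integral_interval_sub_left (hI a (b + ε)) (hI a (a + ε)),
      ← intervalIntegral.integral_interval_sub_left (hI a b) (hI a a)]
    simp only [G, smul_eq_mul]
    ring
  simpa only [key] using (hG b).tendsto_slope_zero_right.sub (hG a).tendsto_slope_zero_right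

theorem eventually_forall_abs_add_sub_lt {f : ℝ → ℝ} (hf : Continuous f) (a b : ℝ) {r : ℝ}
    (hr : 0 < r) : ∀ᶠ ε in 𝓝[>] 0, ∀ s ∈ Icc a b, |f (s + ε) - f s| < r := by
  obtain ⟨η, hη, hf_uc⟩ := Metric.uniformContinuousOn_iff.mp
    (isCompact_Icc.uniformContinuousOn_of_continuous (hf.continuousOn (s := Icc a (b + 1)))) r hr
  filter_upwards [Ioo_mem_nhdsGT (lt_min hη one_pos)] with ε ⟨hε0, hε⟩ s hs
  have hε1 := hε.trans_le (min_le_right _ _)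
  have hεη := hε.trans_le (min_le_left _ _)
  refine hf_uc _ ⟨by linarith [hs.1], by linarith [hs.2]⟩ _ ⟨hs.1, by linarith [hs.2]⟩ ?_
  rwa [Real.dist_eq, add_sub_cancel_left, abs_of_pos hε0]

theorem abs_integral_mul_sub_mul_integral_le {ν : Measure ℝ} {φ w : ℝ → ℝ} {a b c δ : ℝ}
    (hab : a ≤ b) (hw : IntervalIntegrable w ν a b)
    (hφw : IntervalIntegrable (fun s => φ s * w s) ν a b) (hw0 : ∀ s ∈ Ioc a b, 0 ≤ w s)
    (hφ : ∀ s ∈ Ioc a b, |φ s - c| ≤ δ) :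
    |(∫ s in a..b, φ s * w s ∂ν) - c * ∫ s in a..b, w s ∂ν| ≤ δ * ∫ s in a..b, w s ∂ν := by
  rw [← intervalIntegral.integral_const_mul, ← intervalIntegral.integral_sub hφw (hw.const_mul c),
    ← intervalIntegral.integral_const_mul, ← Real.norm_eq_abs]
  refine intervalIntegral.norm_integral_le_of_norm_le hab (ae_of_all _ fun s hs => ?_)
    (hw.const_mul δ)
  rw [← sub_mul, Real.norm_eq_abs, abs_mul, abs_of_nonneg (hw0 s hs)]
  exact mul_le_mul_of_nonneg_right (hφ s hs) (hw0 s hs)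

theorem abs_integral_mul_sub_sum_le {ν : Measure ℝ} {φ w : ℝ → ℝ} {x : ℕ → ℝ} {n : ℕ} {δ : ℝ}
    (hx : Monotone x) (hw : IntervalIntegrable w ν (x 0) (x n))
    (hφw : IntervalIntegrable (fun s => φ s * w s) ν (x 0) (x n))
    (hw0 : ∀ s ∈ Ioc (x 0) (x n), 0 ≤ w s)
    (hφ : ∀ k < n, ∀ s ∈ Ioc (x k) (x (k + 1)), |φ s - φ (x k)| ≤ δ) :
    |(∫ s in x 0..x n, φ s * w s ∂ν)
        - ∑ k ∈ Finset.range n, φ (x k) * ∫ s in x k..x (k + 1), w s ∂ν|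
      ≤ δ * ∫ s in x 0..x n, w s ∂ν := by
  have hIoc : ∀ k < n, Ioc (x k) (x (k + 1)) ⊆ Ioc (x 0) (x n) := fun k hk =>
    Ioc_subset_Ioc (hx k.zero_le) (hx hk)
  have huIcc : ∀ k < n, uIcc (x k) (x (k + 1)) ⊆ uIcc (x 0) (x n) := fun k hk => by
    rw [uIcc_of_le (hx k.le_succ), uIcc_of_le (hx n.zero_le)]
    exact Icc_subset_Icc (hx k.zero_le) (hx hk)
  rw [← intervalIntegral.sum_integral_adjacent_intervals fun k hk => hφw.mono_set (huIcc k hk),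
    ← intervalIntegral.sum_integral_adjacent_intervals fun k hk => hw.mono_set (huIcc k hk),
    Finset.mul_sum, ← Finset.sum_sub_distrib]
  refine (Finset.abs_sum_le_sum_abs _ _).trans (Finset.sum_le_sum fun k hk => ?_)
  rw [Finset.mem_range] at hk
  exact abs_integral_mul_sub_mul_integral_le (hx k.le_succ) (hw.mono_set (huIcc k hk))
    (hφw.mono_set (huIcc k hk)) (fun s hs => hw0 s (hIoc k hk hs)) (hφ k hk)

theorem exists_partition_mesh_lt {a b η : ℝ} (hab : a ≤ b) (hη : 0 < η) :
    ∃ (n : ℕ) (x : ℕ → ℝ), Monotone x ∧ x 0 = a ∧ x n = b ∧ ∀ k, x (k + 1) - x k < η := by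
  obtain ⟨n, hn⟩ := exists_nat_gt ((b - a) / η)
  have hn0 : (0 : ℝ) < n := (div_nonneg (sub_nonneg.2 hab) hη.le).trans_lt hn
  have hstep : (0 : ℝ) ≤ (b - a) / n := div_nonneg (sub_nonneg.2 hab) hn0.le
  refine ⟨n, fun k => a + k * ((b - a) / n), fun i j hij => ?_, by simp, ?_, fun k => ?_⟩
  · dsimp only
    gcongr
  · field_simp
    ring
  · rw [div_lt_iff₀ hη] at hn
    push_cast
    rw [add_mul, one_mul, add_sub_add_left_eq_sub, add_sub_cancel_left, div_lt_iff₀ hn0]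
    linarith

theorem abs_setIntegral_sub_sum_le_of_distribution {μ : Measure ℝ} {φ qv : ℝ → ℝ}
    {x : ℕ → ℝ} {n : ℕ} {δ : ℝ} (hx : Monotone x) (hqv : MonotoneOn qv (Icc (x 0) (x n)))
    (hμ : ∀ u v, x 0 ≤ u → u ≤ v → v ≤ x n → μ (Ioc u v) = ENNReal.ofReal (qv v - qv u))
    (hφ : ContinuousOn φ (Icc (x 0) (x n)))
    (hφ_step : ∀ k < n, ∀ s ∈ Ioc (x k) (x (k + 1)), |φ s - φ (x k)| ≤ δ) :
    |(∫ s in Ioc (x 0) (x n), φ s ∂μ)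
        - ∑ k ∈ Finset.range n, φ (x k) * (qv (x (k + 1)) - qv (x k))|
      ≤ δ * (qv (x n) - qv (x 0)) := by
  have hab : x 0 ≤ x n := hx n.zero_le
  have hμ_one : ∀ u v, x 0 ≤ u → u ≤ v → v ≤ x n →
      ∫ _ in u..v, (1 : ℝ) ∂μ = qv v - qv u := by
    intro u v hau huv hvb
    rw [intervalIntegral.integral_of_le huv, setIntegral_const, measureReal_def,
      hμ u v hau huv hvb, ENNReal.toReal_ofReal (sub_nonneg.2 (hqv ⟨hau, huv.trans hvb⟩
        ⟨hau.trans huv, hvb⟩ huv)), smul_eq_mul, mul_one]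
  -- this is the case `w = 1` of `abs_integral_mul_sub_sum_le`
  have hφμ : IntervalIntegrable (fun s => φ s * 1) μ (x 0) (x n) := by
    obtain ⟨M, hM⟩ := isCompact_Icc.exists_bound_of_continuousOn hφ
    rw [intervalIntegrable_iff_integrableOn_Ioc_of_le hab]
    simp only [mul_one]
    exact IntegrableOn.of_bound (by simp [hμ _ _ le_rfl hab le_rfl])
      ((hφ.mono Ioc_subset_Icc_self).aestronglyMeasurable measurableSet_Ioc) M
      (ae_restrict_of_forall_mem measurableSet_Ioc fun s hs => hM s (Ioc_subset_Icc_self hs))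
  have h1μ : IntervalIntegrable (fun _ => (1 : ℝ)) μ (x 0) (x n) :=
    (intervalIntegrable_const_iff).2 (Or.inr (by simp [uIoc_of_le hab, hμ _ _ le_rfl hab le_rfl]))
  have hsum : ∑ k ∈ Finset.range n, φ (x k) * (∫ _ in x k..x (k + 1), (1 : ℝ) ∂μ)
      = ∑ k ∈ Finset.range n, φ (x k) * (qv (x (k + 1)) - qv (x k)) :=
    Finset.sum_congr rfl fun k hk => by
      rw [hμ_one _ _ (hx k.zero_le) (hx k.le_succ) (hx (Finset.mem_range.1 hk))]
  simpa only [hμ_one _ _ le_rfl hab le_rfl, hsum, mul_one, intervalIntegral.integral_of_le hab]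
    using abs_integral_mul_sub_sum_le hx h1μ hφμ (fun _ _ => zero_le_one) hφ_step

theorem tendsto_integral_mul_of_tendsto_distribution {ι : Type*} {l : Filter ι}
    {w : ι → ℝ → ℝ} {φ qv : ℝ → ℝ} {μ : Measure ℝ} {a b : ℝ} (hab : a ≤ b)
    (hw_int : ∀ i, IntervalIntegrable (w i) volume a b)
    (hw0 : ∀ᶠ i in l, ∀ s ∈ Ioc a b, 0 ≤ w i s)
    (hw_lim : ∀ x ∈ Icc a b, Tendsto (fun i => ∫ s in a..x, w i s) l (𝓝 (qv x - qv a)))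
    (hqv : MonotoneOn qv (Icc a b))
    (hμ : ∀ u v, a ≤ u → u ≤ v → v ≤ b → μ (Ioc u v) = ENNReal.ofReal (qv v - qv u))
    (hφ : ContinuousOn φ (Icc a b)) :
    Tendsto (fun i => ∫ s in a..b, φ s * w i s) l (𝓝 (∫ s in Ioc a b, φ s ∂μ)) := by
  apply tendsto_of_forall_pos_eventually_abs_sub_le (C := 2 * (qv b - qv a) + 2)
  intro δ hδ
  obtain ⟨η, hη, hφ_uc⟩ := Metric.uniformContinuousOn_iff.mp
    (isCompact_Icc.uniformContinuousOn_of_continuous hφ) δ hδ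
  obtain ⟨n, x, hx, rfl, rfl, hmesh⟩ := exists_partition_mesh_lt hab hη
  have hxmem : ∀ k ≤ n, x k ∈ Icc (x 0) (x n) := fun k hk => ⟨hx k.zero_le, hx hk⟩
  have hφ_step : ∀ k < n, ∀ s ∈ Ioc (x k) (x (k + 1)), |φ s - φ (x k)| ≤ δ := by
    intro k hk s hs
    refine (hφ_uc s ⟨(hxmem k hk.le).1.trans hs.1.le, hs.2.trans (hxmem (k + 1) hk).2⟩ (x k)
      (hxmem k hk.le) ?_).le
    rw [Real.dist_eq, abs_of_pos (sub_pos.2 hs.1)]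
    linarith [hmesh k, hs.2]
  set S := ∑ k ∈ Finset.range n, φ (x k) * (qv (x (k + 1)) - qv (x k))
  set S' := fun i => ∑ k ∈ Finset.range n, φ (x k) * ∫ s in x k..x (k + 1), w i s
  have hμ_sum := abs_setIntegral_sub_sum_le_of_distribution hx hqv hμ hφ hφ_step
  have hw_sum : ∀ᶠ i in l,
      |(∫ s in x 0..x n, φ s * w i s) - S' i| ≤ δ * ∫ s in x 0..x n, w i s := by
    filter_upwards [hw0] with i hi
    exact abs_integral_mul_sub_sum_le hx (hw_int i)
      ((hw_int i).continuousOn_mul (by rwa [uIcc_of_le hab])) hi hφ_step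
  have hS : Tendsto S' l (𝓝 S) := by
    refine tendsto_finsetSum _ fun k hk => Tendsto.const_mul _ ?_
    rw [Finset.mem_range] at hk
    have hsub : ∀ j ≤ n, uIcc (x 0) (x j) ⊆ uIcc (x 0) (x n) := fun j hj =>
      uIcc_subset_uIcc left_mem_uIcc (Icc_subset_uIcc (hxmem j hj))
    have := ((hw_lim _ (hxmem (k + 1) hk)).sub (hw_lim _ (hxmem k hk.le))).congr fun i =>
      intervalIntegral.integral_interval_sub_left ((hw_int i).mono_set (hsub _ hk))
        ((hw_int i).mono_set (hsub _ hk.le))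
    rwa [sub_sub_sub_cancel_right] at this
  filter_upwards [hw_sum, (hw_lim _ (hxmem n le_rfl)).eventually (ge_mem_nhds (lt_add_one _)),
    Metric.tendsto_nhds.mp hS δ hδ] with i hi hi_mass hi_S
  rw [Real.dist_eq] at hi_S
  rw [abs_sub_comm] at hμ_sum
  calc |(∫ s in x 0..x n, φ s * w i s) - ∫ s in Ioc (x 0) (x n), φ s ∂μ|
      ≤ δ * (∫ s in x 0..x n, w i s) + δ + δ * (qv (x n) - qv (x 0)) := by
        linarith [abs_sub_le (∫ s in x 0..x n, φ s * w i s) (S' i) S,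
          abs_sub_le (∫ s in x 0..x n, φ s * w i s) S (∫ s in Ioc (x 0) (x n), φ s ∂μ)]
    _ ≤ δ * (qv (x n) - qv (x 0) + 1) + δ + δ * (qv (x n) - qv (x 0)) := by gcongr
    _ = (2 * (qv (x n) - qv (x 0)) + 2) * δ := by ring

theorem tendsto_partial_time_quotient {G Gt : ℝ → ℝ → ℝ} {y : ℝ → ℝ} {a b s y₀ : ℝ}
    (hG : ∀ x, ∀ r ∈ Icc a b, HasDerivWithinAt (fun r => G r x) (Gt r x) (Icc a b) r)
    (hGt : ContinuousWithinAt (fun p : ℝ × ℝ => Gt p.1 p.2) (Icc a b ×ˢ univ) (s, y₀))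
    (hs : s ∈ Ico a b) (hy : Tendsto y (𝓝[>] 0) (𝓝 y₀)) :
    Tendsto (fun ε => (G (s + ε) (y ε) - G s (y ε)) / ε) (𝓝[>] 0) (𝓝 (Gt s y₀)) := by
  rw [Metric.tendsto_nhds]
  intro δ hδ
  obtain ⟨ρ, hρ, hGt_near⟩ := Metric.continuousWithinAt_iff.mp hGt (δ / 2) (half_pos hδ)
  filter_upwards [Ioo_mem_nhdsGT (lt_min hρ (sub_pos.2 hs.2)),
    Metric.tendsto_nhds.mp hy ρ hρ] with ε ⟨hε0, hε⟩ hyε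
  have hερ := hε.trans_le (min_le_left _ _)
  have hεb := hε.trans_le (min_le_right _ _)
  have hseg : uIcc s (s + ε) = Icc s (s + ε) := uIcc_of_le (by linarith)
  have hsub : uIcc s (s + ε) ⊆ Icc a b := hseg ▸ Icc_subset_Icc hs.1 (by linarith)
  have hstep := abs_sub_sub_mul_le_of_hasDerivWithinAt (g := fun r => G r (y ε))
    (c := Gt s y₀) (δ := δ / 2) (fun r hr => (hG (y ε) r (hsub hr)).mono hsub) fun r hr => by
      refine (hGt_near (x := (r, y ε)) ⟨hsub hr, mem_univ _⟩ ?_).le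
      rw [hseg] at hr
      rw [Prod.dist_eq, max_lt_iff, Real.dist_eq, abs_of_nonneg (by linarith [hr.1])]
      exact ⟨by linarith [hr.2], hyε⟩
  rw [add_sub_cancel_left, abs_of_pos hε0, mul_comm (Gt s y₀)] at hstep
  rw [Real.dist_eq, div_sub' hε0.ne', abs_div, abs_of_pos hε0, div_lt_iff₀ hε0]
  exact hstep.trans_lt (mul_lt_mul_of_pos_right (half_lt_self hδ) hε0)

theorem norm_partial_time_quotient_le {G Gt : ℝ → ℝ → ℝ} {a b s ε y M : ℝ}
    (hG : ∀ r ∈ Icc a b, HasDerivWithinAt (fun r => G r y) (Gt r y) (Icc a b) r)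
    (hM : ∀ r ∈ Icc a b, ‖Gt r y‖ ≤ M) (hs : s ∈ Icc a b) (hε : 0 < ε) :
    ‖(G (min (s + ε) b) y - G s y) / ε‖ ≤ M := by
  have hmin : min (s + ε) b ∈ Icc a b := ⟨le_min (by linarith [hs.1]) (hs.1.trans hs.2),
    min_le_right _ _⟩
  have hlen : ‖min (s + ε) b - s‖ ≤ ε := by
    rw [Real.norm_eq_abs, abs_of_nonneg (sub_nonneg.2 (le_min (by linarith) hs.2))]
    linarith [min_le_left (s + ε) b]
  rw [norm_div, Real.norm_of_nonneg hε.le, div_le_iff₀ hε]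
  exact ((convex_Icc a b).norm_image_sub_le_of_norm_hasDerivWithin_le hG hM hs hmin).trans
    (mul_le_mul_of_nonneg_left hlen ((norm_nonneg _).trans (hM s hs)))

theorem tendsto_integral_partial_time_quotient {G Gt : ℝ → ℝ → ℝ} {γ : ℝ → ℝ} {a b c : ℝ}
    (hac : a ≤ c) (hcb : c ≤ b)
    (hG : ∀ x, ∀ r ∈ Icc a b, HasDerivWithinAt (fun r => G r x) (Gt r x) (Icc a b) r)
    (hG_cont : ContinuousOn (fun p : ℝ × ℝ => G p.1 p.2) (Icc a b ×ˢ univ))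
    (hGt_cont : ContinuousOn (fun p : ℝ × ℝ => Gt p.1 p.2) (Icc a b ×ˢ univ))
    (hγ : Continuous γ) :
    Tendsto (fun ε => ∫ s in a..c, (G (min (s + ε) b) (γ (s + ε)) - G s (γ (s + ε))) / ε)
      (𝓝[>] 0) (𝓝 (∫ s in a..c, Gt s (γ s))) := by
  obtain ⟨C, hC⟩ :=
    isCompact_Icc.exists_bound_of_continuousOn (hγ.continuousOn (s := Icc a (c + 1)))
  obtain ⟨M, hM⟩ :=
    (isCompact_Icc.prod (isCompact_closedBall (0 : ℝ) C)).exists_bound_of_continuousOn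
      (hGt_cont.mono (prod_mono_right (subset_univ _)))
  have hmin : ∀ ε > 0, ∀ s ∈ Icc a c, min (s + ε) b ∈ Icc a b := fun ε hε s hs =>
    ⟨le_min (by linarith [hs.1]) (hac.trans hcb), min_le_right _ _⟩
  have hγε : ∀ ε, Continuous fun s => γ (s + ε) := fun ε => hγ.comp (continuous_add_const ε)
  refine intervalIntegral.tendsto_integral_filter_of_dominated_convergence (fun _ => M) ?_ ?_
    intervalIntegrable_const ?_
  · filter_upwards [self_mem_nhdsWithin] with ε hε
    rw [uIoc_of_le hac]
    refine ContinuousOn.aestronglyMeasurable (ContinuousOn.mono ?_ Ioc_subset_Icc_self)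
      measurableSet_Ioc
    refine ((hG_cont.comp_uncurry_prodMk ?_ (hγε ε) (hmin ε hε)).sub
      (hG_cont.comp_uncurry_prodMk continuousOn_id (hγε ε) ?_)).div_const ε
    · exact ((continuous_add_const ε).min continuous_const).continuousOn
    · exact fun s hs => ⟨hs.1, hs.2.trans hcb⟩
  · filter_upwards [Ioo_mem_nhdsGT one_pos] with ε ⟨hε0, hε1⟩
    refine ae_of_all _ fun s hs => ?_
    rw [uIoc_of_le hac] at hs
    have hγs : γ (s + ε) ∈ Metric.closedBall 0 C :=
      mem_closedBall_zero_iff.2 (hC _ ⟨by linarith [hs.1], by linarith [hs.2]⟩)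
    exact norm_partial_time_quotient_le (hG _) (fun r hr => hM (r, γ (s + ε)) ⟨hr, hγs⟩)
      ⟨hs.1.le, hs.2.trans hcb⟩ hε0
  -- at `s = b` the clamped quotient vanishes, so that point has to be discarded
  · filter_upwards [(countable_singleton b).ae_notMem volume] with s hsb hs
    rw [uIoc_of_le hac] at hs
    have hs' : s ∈ Ico a b := ⟨hs.1.le, lt_of_le_of_ne (hs.2.trans hcb) hsb⟩
    have hγs : Tendsto (fun ε => γ (s + ε)) (𝓝[>] 0) (𝓝 (γ s)) :=
      ((hγ.comp (continuous_const_add s)).tendsto' 0 (γ s) (by simp)).mono_left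
        nhdsWithin_le_nhds
    refine (tendsto_partial_time_quotient hG (hGt_cont _ ⟨Ico_subset_Icc_self hs', mem_univ _⟩)
      hs' hγs).congr' ?_
    filter_upwards [Ioo_mem_nhdsGT (sub_pos.2 hs'.2)] with ε hε
    rw [min_eq_left (by linarith [hε.2])]

theorem tendsto_integral_taylor_remainder_div {F Fx Fxx : ℝ → ℝ → ℝ} {f : ℝ → ℝ} {a b L : ℝ}
    (hab : a ≤ b) (hf : Continuous f)
    (hFx : ∀ t ∈ Icc a b, ∀ x, HasDerivAt (fun y => F t y) (Fx t x) x)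
    (hFxx : ∀ t ∈ Icc a b, ∀ x, HasDerivAt (fun y => Fx t y) (Fxx t x) x)
    (hFxx_cont : ContinuousOn (fun p : ℝ × ℝ => Fxx p.1 p.2) (Icc a b ×ˢ univ))
    (hqv : ∀ᶠ ε in 𝓝[>] 0, ∫ s in a..b, (f (s + ε) - f s) ^ 2 / ε ≤ L) :
    Tendsto (fun ε => ∫ s in a..b, (F s (f (s + ε)) - F s (f s) - Fx s (f s) * (f (s + ε) - f s)
      - 1 / 2 * Fxx s (f s) * (f (s + ε) - f s) ^ 2) / ε) (𝓝[>] 0) (𝓝 0) := by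
  apply tendsto_of_forall_pos_eventually_abs_sub_le (C := L)
  intro δ hδ
  obtain ⟨C, hC⟩ :=
    isCompact_Icc.exists_bound_of_continuousOn (hf.continuousOn (s := Icc a (b + 1)))
  obtain ⟨r, hr, hFxx_uc⟩ := Metric.uniformContinuousOn_iff.mp
    ((isCompact_Icc.prod (isCompact_Icc (a := -C) (b := C))).uniformContinuousOn_of_continuous
      (hFxx_cont.mono (prod_mono_right (subset_univ _)))) δ hδ
  filter_upwards [hqv, Ioo_mem_nhdsGT one_pos, eventually_forall_abs_add_sub_lt hf a b hr]
    with ε hε_qv ⟨hε0, hε1⟩ hε_incr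
  have hrange : ∀ s ∈ Icc a b, uIcc (f s) (f (s + ε)) ⊆ Icc (-C) C := fun s hs =>
    uIcc_subset_Icc (abs_le.mp (hC s ⟨hs.1, by linarith [hs.2]⟩))
      (abs_le.mp (hC (s + ε) ⟨by linarith [hs.1], by linarith [hs.2]⟩))
  have hpt : ∀ s ∈ Icc a b, |F s (f (s + ε)) - F s (f s) - Fx s (f s) * (f (s + ε) - f s)
      - 1 / 2 * Fxx s (f s) * (f (s + ε) - f s) ^ 2| ≤ δ * (f (s + ε) - f s) ^ 2 := by
    intro s hs
    refine abs_taylor_remainder_two_le (fun v _ => hFx s hs v) (fun v _ => hFxx s hs v)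
      fun v hv => (hFxx_uc (s, v) ⟨hs, hrange s hs hv⟩ (s, f s)
        ⟨hs, hrange s hs left_mem_uIcc⟩ ?_).le
    rw [Prod.dist_eq, dist_self, Real.dist_eq]
    exact max_lt hr ((abs_sub_left_of_mem_uIcc hv).trans_lt (hε_incr s hs))
  rw [sub_zero, ← Real.norm_eq_abs]
  refine (intervalIntegral.norm_integral_le_of_norm_le hab
    (g := fun s => δ * ((f (s + ε) - f s) ^ 2 / ε)) (ae_of_all _ fun s hs => ?_) ?_).trans ?_
  · rw [norm_div, Real.norm_eq_abs, Real.norm_of_nonneg hε0.le, mul_div_assoc']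
    exact div_le_div_of_nonneg_right (hpt s (Ioc_subset_Icc_self hs)) hε0.le
  · exact ((((hf.comp (continuous_add_const ε)).sub hf).pow 2).div_const ε
      |>.const_mul δ).intervalIntegrable _ _
  · rw [intervalIntegral.integral_const_mul, mul_comm]
    exact mul_le_mul_of_nonneg_right hε_qv hδ.le

theorem integral_forward_quotient_eq {T t ε : ℝ} {f : ℝ → ℝ} {F Fx Fxx : ℝ → ℝ → ℝ}
    (ht0 : 0 ≤ t) (htT : t ≤ T) (hε : 0 < ε) (hf : Continuous f)
    (hF_cont : ContinuousOn (fun p : ℝ × ℝ => F p.1 p.2) (Icc 0 T ×ˢ univ))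
    (hFx_cont : ContinuousOn (fun p : ℝ × ℝ => Fx p.1 p.2) (Icc 0 T ×ˢ univ))
    (hFxx_cont : ContinuousOn (fun p : ℝ × ℝ => Fxx p.1 p.2) (Icc 0 T ×ˢ univ)) :
    ∫ s in (0 : ℝ)..t, Fx s (f s) * (f (s + ε) - f s) / ε
      = (∫ s in (0 : ℝ)..t,
            (F (max 0 (min (s + ε) T)) (f (s + ε)) - F (max 0 (min s T)) (f s))) / ε
        - (∫ s in (0 : ℝ)..t, (F (min (s + ε) T) (f (s + ε)) - F s (f (s + ε))) / ε)
        - 1 / 2 * (∫ s in (0 : ℝ)..t, Fxx s (f s) * ((f (s + ε) - f s) ^ 2 / ε))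
        - ∫ s in (0 : ℝ)..t, (F s (f (s + ε)) - F s (f s) - Fx s (f s) * (f (s + ε) - f s)
            - 1 / 2 * Fxx s (f s) * (f (s + ε) - f s) ^ 2) / ε := by
  have hT0 : 0 ≤ T := ht0.trans htT
  have hproj : ∀ r, max 0 (min r T) ∈ Icc 0 T := fun r =>
    ⟨le_max_left _ _, max_le hT0 (min_le_right _ _)⟩
  have hid : MapsTo id (Icc 0 t) (Icc 0 T) := fun s hs => ⟨hs.1, hs.2.trans htT⟩
  have hfε : Continuous fun s => f (s + ε) := hf.comp (continuous_add_const ε)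
  have cF := hF_cont.comp_uncurry_prodMk continuousOn_id hf hid
  have cFε := hF_cont.comp_uncurry_prodMk continuousOn_id hfε hid
  have cFx := hFx_cont.comp_uncurry_prodMk continuousOn_id hf hid
  have cFxx := hFxx_cont.comp_uncurry_prodMk continuousOn_id hf hid
  have cFmin := hF_cont.comp_uncurry_prodMk (S := Icc 0 t)
    ((continuous_add_const ε).min continuous_const).continuousOn hfε
    fun s hs => ⟨le_min (by linarith [hs.1]) hT0, min_le_right _ _⟩
  have cFproj := hF_cont.comp_uncurry_prodMk (S := Icc 0 t)
    (continuous_const.max ((continuous_add_const ε).min continuous_const)).continuousOn hfε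
    fun s _ => hproj (s + ε)
  have cFproj₀ := hF_cont.comp_uncurry_prodMk (S := Icc 0 t)
    (continuous_const.max (continuous_id.min continuous_const)).continuousOn hf
    fun s _ => hproj s
  have cΔ : ContinuousOn (fun s => f (s + ε) - f s) (Icc 0 t) := (hfε.sub hf).continuousOn
  have I : ∀ {h : ℝ → ℝ}, ContinuousOn h (Icc 0 t) → IntervalIntegrable h volume 0 t :=
    fun hc => (uIcc_of_le ht0 ▸ hc).intervalIntegrable
  have iu : IntervalIntegrable (fun s =>
      (F (max 0 (min (s + ε) T)) (f (s + ε)) - F (max 0 (min s T)) (f s)) / ε) volume 0 t :=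
    I ((cFproj.sub cFproj₀).div_const ε)
  have iA : IntervalIntegrable (fun s => (F (min (s + ε) T) (f (s + ε)) - F s (f (s + ε))) / ε)
      volume 0 t := I ((cFmin.sub cFε).div_const ε)
  have iB : IntervalIntegrable (fun s => 1 / 2 * (Fxx s (f s) * ((f (s + ε) - f s) ^ 2 / ε)))
      volume 0 t := I ((cFxx.mul (cΔ.pow 2 |>.div_const ε)).const_mul (1 / 2))
  have iR : IntervalIntegrable (fun s => (F s (f (s + ε)) - F s (f s)
      - Fx s (f s) * (f (s + ε) - f s) - 1 / 2 * Fxx s (f s) * (f (s + ε) - f s) ^ 2) / ε)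
      volume 0 t :=
    I ((((cFε.sub cF).sub (cFx.mul cΔ)).sub
      ((cFxx.const_mul (1 / 2)).mul (cΔ.pow 2))).div_const ε)
  rw [← intervalIntegral.integral_div, ← intervalIntegral.integral_const_mul,
    ← intervalIntegral.integral_sub iu iA, ← intervalIntegral.integral_sub (iu.sub iA) iB,
    ← intervalIntegral.integral_sub ((iu.sub iA).sub iB) iR]
  refine intervalIntegral.integral_congr fun s hs => ?_
  rw [uIcc_of_le ht0] at hs
  rw [min_eq_left (hs.2.trans htT), max_eq_right hs.1,
    max_eq_right (le_min (by linarith [hs.1] : 0 ≤ s + ε) hT0)]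
  field_simp
  ring

theorem deterministic_ito_formula_general
    (T : ℝ) (f : ℝ → ℝ) (hf : Continuous f)
    (qv : ℝ → ℝ)
    (hqv_mono : MonotoneOn qv (Set.Icc 0 T))
    (hqv_zero : qv 0 = 0)
    (hqv_lim : ∀ x ∈ Set.Icc (0 : ℝ) T,
      Tendsto (fun ε : ℝ => (1 / ε) * ∫ s in (0 : ℝ)..x, (f (s + ε) - f s) ^ 2)
        (𝓝[>] 0) (𝓝 (qv x)))
    (μ : Measure ℝ)
    (hμ : ∀ u v : ℝ, 0 ≤ u → u ≤ v → v ≤ T →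
      μ (Set.Ioc u v) = ENNReal.ofReal (qv v - qv u))
    (F Ft Fx Fxx : ℝ → ℝ → ℝ)
    (hF_cont : ContinuousOn (fun p : ℝ × ℝ => F p.1 p.2) (Set.Icc 0 T ×ˢ Set.univ))
    (hFt : ∀ x : ℝ, ∀ t ∈ Set.Icc (0 : ℝ) T,
      HasDerivWithinAt (fun r => F r x) (Ft t x) (Set.Icc 0 T) t)
    (hFx : ∀ t ∈ Set.Icc (0 : ℝ) T, ∀ x : ℝ, HasDerivAt (fun y => F t y) (Fx t x) x)
    (hFxx : ∀ t ∈ Set.Icc (0 : ℝ) T, ∀ x : ℝ, HasDerivAt (fun y => Fx t y) (Fxx t x) x)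
    (hFt_cont : ContinuousOn (fun p : ℝ × ℝ => Ft p.1 p.2) (Set.Icc 0 T ×ˢ Set.univ))
    (hFx_cont : ContinuousOn (fun p : ℝ × ℝ => Fx p.1 p.2) (Set.Icc 0 T ×ˢ Set.univ))
    (hFxx_cont : ContinuousOn (fun p : ℝ × ℝ => Fxx p.1 p.2) (Set.Icc 0 T ×ˢ Set.univ)) :
    ∀ t ∈ Set.Icc (0 : ℝ) T,
      Tendsto (fun ε : ℝ => ∫ s in (0 : ℝ)..t, Fx s (f s) * (f (s + ε) - f s) / ε)
        (𝓝[>] 0)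
        (𝓝 (F t (f t) - F 0 (f 0) - (∫ s in (0 : ℝ)..t, Ft s (f s))
              - (1 / 2) * ∫ s in Set.Ioc (0 : ℝ) t, Fxx s (f s) ∂μ)) := by
  rintro t ⟨ht0, htT⟩
  have hT0 : 0 ≤ T := ht0.trans htT
  have htT' : Icc 0 t ⊆ Icc 0 T := Icc_subset_Icc_right htT
  have hqv_t : ∀ x ∈ Icc 0 t, Tendsto (fun ε => ∫ s in (0 : ℝ)..x, (f (s + ε) - f s) ^ 2 / ε)
      (𝓝[>] 0) (𝓝 (qv x - qv 0)) := fun x hx => by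
    simpa only [hqv_zero, sub_zero, intervalIntegral.integral_div, one_div_mul_eq_div]
      using hqv_lim x (htT' hx)
  have h_tel := tendsto_integral_sub_comp_add_div (g := fun s => F (max 0 (min s T)) (f s))
    (continuousOn_univ.1 (hF_cont.comp_uncurry_prodMk
      (continuous_const.max (continuous_id.min continuous_const)).continuousOn hf
      fun s _ => ⟨le_max_left _ _, max_le hT0 (min_le_right _ _)⟩)) 0 t
  have h_time := tendsto_integral_partial_time_quotient ht0 htT hFt hF_cont hFt_cont hf
  have h_qv := tendsto_integral_mul_of_tendsto_distribution (φ := fun s => Fxx s (f s))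
    (w := fun ε s => (f (s + ε) - f s) ^ 2 / ε) ht0
    (fun ε => ((((hf.comp (continuous_add_const ε)).sub hf).pow 2).div_const ε).intervalIntegrable
      _ _)
    (eventually_nhdsWithin_of_forall fun ε hε s _ => div_nonneg (sq_nonneg _) (le_of_lt hε))
    hqv_t (hqv_mono.mono htT') (fun u v hu huv hv => hμ u v hu huv (hv.trans htT))
    (hFxx_cont.comp_uncurry_prodMk continuousOn_id hf htT')
  have h_rem := tendsto_integral_taylor_remainder_div ht0 hf (fun s hs => hFx s (htT' hs))
    (fun s hs => hFxx s (htT' hs)) (hFxx_cont.mono (prod_mono htT' subset_rfl))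
    ((hqv_t t (right_mem_Icc.2 ht0)).eventually (ge_mem_nhds (lt_add_one _)))
  have := ((h_tel.sub h_time).sub (h_qv.const_mul (1 / 2))).sub h_rem
  rw [max_eq_right (le_min ht0 hT0), min_eq_left htT, min_eq_left hT0, max_self, sub_zero] at this
  refine this.congr' ?_
  filter_upwards [self_mem_nhdsWithin] with ε hε
  exact (integral_forward_quotient_eq ht0 htT hε hf hF_cont hFx_cont hFxx_cont).symm

/-- **Deterministic Itô formula via regularizations for finite quadratic variation
functions.**  Let `f : [0,T] → ℝ` be continuous, extended by `f(s) = f(0)` for `s < 0`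
and `f(s) = f(T)` for `s > T`, with deterministic quadratic variation `[f] = qv`
(continuous, nondecreasing, `qv 0 = 0`), and let `μ` be the Lebesgue–Stieltjes measure
of `qv` on `[0,T]` (i.e. `μ(]u,v]) = qv v - qv u`).  Let `F ∈ C^{1,2}([0,T] × ℝ; ℝ)`,
with partial derivatives `∂_t F = Ft`, `∂_x F = Fx`, `∂²_{xx} F = Fxx`.  Then for every
`t ∈ [0,T]` the forward-regularization limit
`limit_{ε→0⁺} ∫_0^t Fx(s, f(s)) (f(s+ε) - f(s))/ε ds` exists and equals
`F(t,f(t)) - F(0,f(0)) - ∫_0^t Ft(s,f(s)) ds - (1/2) ∫_{]0,t]} Fxx(s,f(s)) dμ(s)`. -/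
theorem deterministic_ito_formula
    (T : ℝ) (hT : 0 < T) (f : ℝ → ℝ) (hf : Continuous f)
    (hfext0 : ∀ s < (0 : ℝ), f s = f 0) (hfextT : ∀ s > T, f s = f T)
    (qv : ℝ → ℝ)
    (hqv_mono : MonotoneOn qv (Set.Icc 0 T))
    (hqv_cont : ContinuousOn qv (Set.Icc 0 T))
    (hqv_zero : qv 0 = 0)
    (hqv_lim : ∀ x ∈ Set.Icc (0 : ℝ) T,
      Tendsto (fun ε : ℝ => (1 / ε) * ∫ s in (0 : ℝ)..x, (f (s + ε) - f s) ^ 2)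
        (𝓝[>] 0) (𝓝 (qv x)))
    (μ : Measure ℝ)
    (hμ : ∀ u v : ℝ, 0 ≤ u → u ≤ v → v ≤ T →
      μ (Set.Ioc u v) = ENNReal.ofReal (qv v - qv u))
    (F Ft Fx Fxx : ℝ → ℝ → ℝ)
    (hF_cont : ContinuousOn (fun p : ℝ × ℝ => F p.1 p.2) (Set.Icc 0 T ×ˢ Set.univ))
    (hFt : ∀ x : ℝ, ∀ t ∈ Set.Icc (0 : ℝ) T,
      HasDerivWithinAt (fun r => F r x) (Ft t x) (Set.Icc 0 T) t)
    (hFx : ∀ t ∈ Set.Icc (0 : ℝ) T, ∀ x : ℝ, HasDerivAt (fun y => F t y) (Fx t x) x)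
    (hFxx : ∀ t ∈ Set.Icc (0 : ℝ) T, ∀ x : ℝ, HasDerivAt (fun y => Fx t y) (Fxx t x) x)
    (hFt_cont : ContinuousOn (fun p : ℝ × ℝ => Ft p.1 p.2) (Set.Icc 0 T ×ˢ Set.univ))
    (hFx_cont : ContinuousOn (fun p : ℝ × ℝ => Fx p.1 p.2) (Set.Icc 0 T ×ˢ Set.univ))
    (hFxx_cont : ContinuousOn (fun p : ℝ × ℝ => Fxx p.1 p.2) (Set.Icc 0 T ×ˢ Set.univ)) :
    ∀ t ∈ Set.Icc (0 : ℝ) T,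
      Tendsto (fun ε : ℝ => ∫ s in (0 : ℝ)..t, Fx s (f s) * (f (s + ε) - f s) / ε)
        (𝓝[>] 0)
        (𝓝 (F t (f t) - F 0 (f 0) - (∫ s in (0 : ℝ)..t, Ft s (f s))
              - (1 / 2) * ∫ s in Set.Ioc (0 : ℝ) t, Fxx s (f s) ∂μ)) :=
  deterministic_ito_formula_general T f hf qv hqv_mono hqv_zero hqv_lim μ hμ F Ft Fx Fxx hF_cont hFt
    hFx hFxx hFt_cont hFx_cont hFxx_cont
end

section
/- Let a<b be real numbers, let f:[a,b]→ℝ be a càdlàg function of bounded variation, and let g:[a,b]→ℝ be a càdlàg function. Write f_{J̄} for the extension of f to ℝ given by f_{J̄}(x)=f(b) for x>b, f_{J̄}(x)=f(x) on [a,b], f_{J̄}(x)=0 for x<a. Then the (deterministic) forward integral ∫_{]a,b]} g d⁻f exists, i.e. the limit lim_{ε→0⁺} ∫_a^b g(s) (f_{J̄}(s+ε)−f_{J̄}(s))/ε ds exists, and it equals the Lebesgue–Stieltjes integral ∫_{]a,b]} g(s⁻) df(s) of the left-limit function s↦g(s⁻) against the measure df determined by df(]a,x])=f(x)−f(a). 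-/
/-!
On `]a,b]` write `f = F₁ - F₂`; for `s ∈ ]a,b]` the increment `f_{J̄}(s+ε) - f_{J̄}(s)` is
then `μ₁(]s,s+ε]) - μ₂(]s,s+ε])`, where `μᵢ` is `dFᵢ` restricted to `]a,b]`. For a finite
measure `μ`, Fubini turns `∫_{]a,b]} g(s) μ(]s,s+ε]) ds / ε` into
`∫ (ε⁻¹ ∫_{[t-ε,t[ ∩ ]a,b]} g) dμ(t)`, since `t ∈ ]s,s+ε]` iff `s ∈ [t-ε,t[`. The inner
averages tend to `g(t⁻)` and are bounded by `sup |g|`, which is finite because a càdlàg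
function on a compact interval is bounded; dominated convergence concludes.
-/
open MeasureTheory Filter Topology Set

/-- The extension `f_{J̄}` of `f : [a,b] → ℝ` to `ℝ`: `f_{J̄}(x) = f(b)` for `x > b`,
`f_{J̄}(x) = f(x)` on `[a,b]`, and `f_{J̄}(x) = 0` for `x < a`. -/
noncomputable def extendJbar (a b : ℝ) (f : ℝ → ℝ) (x : ℝ) : ℝ :=
  if x < a then 0 else if x ≤ b then f x else f b

theorem IsCompact.bddAbove_image_of_isBoundedUnder {X α : Type*} [TopologicalSpace X]
    [SemilatticeSup α] [Nonempty α] {K : Set X} {f : X → α} (hK : IsCompact K)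
    (hf : ∀ x ∈ K, IsBoundedUnder (· ≤ ·) (𝓝[K] x) f) : BddAbove (f '' K) := by
  refine hK.induction_on (by simp) (fun s t hst ht => ht.mono (image_mono hst))
    (fun s t hs ht => by rw [image_union]; exact hs.union ht) fun x hx => ?_
  obtain ⟨s, hs, hxs⟩ := isBoundedUnder_iff_eventually_bddAbove.1 (hf x hx)
  exact ⟨s, hxs, hs⟩

theorem bddAbove_norm_image_Icc_of_tendsto_nhdsWithin {E : Type*} [NormedAddCommGroup E]
    {a b : ℝ} {g : ℝ → E}
    (hgr : ∀ x ∈ Icc a b, ContinuousWithinAt g (Icc x b) x)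
    (hgl : ∀ x ∈ Ioc a b, ∃ l, Tendsto g (𝓝[<] x) (𝓝 l)) :
    BddAbove ((‖g ·‖) '' Icc a b) := by
  refine isCompact_Icc.bddAbove_image_of_isBoundedUnder fun x hx => ?_
  have hleft : IsBoundedUnder (· ≤ ·) (𝓝[Ico a x] x) (‖g ·‖) := by
    rcases hx.1.eq_or_lt with rfl | hax
    · rw [Ico_self, nhdsWithin_empty, IsBoundedUnder, Filter.map_bot]
      exact isBounded_bot.2 ⟨0⟩
    · obtain ⟨l, hl⟩ := hgl x ⟨hax, hx.2⟩
      rw [nhdsWithin_Ico_eq_nhdsLT hax]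
      exact hl.norm.isBoundedUnder_le
  have hright := (hgr x hx).tendsto.norm.isBoundedUnder_le
  rw [← Ico_union_Icc_eq_Icc hx.1 hx.2, nhdsWithin_union]
  simpa only [IsBoundedUnder, Filter.map_sup] using isBounded_sup hleft hright

theorem tendsto_min_ceil_mul_div {b x : ℝ} (hxb : x ≤ b) :
    Tendsto (fun n : ℕ => min b (⌈x * (n + 1)⌉ / (n + 1))) atTop (𝓝[Icc x b] x) := by
  have hlow (n : ℕ) : x ≤ (⌈x * (n + 1)⌉ : ℝ) / (n + 1) := by
    rw [le_div_iff₀ (by positivity)]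
    exact Int.le_ceil _
  have hup (n : ℕ) : (⌈x * (n + 1)⌉ : ℝ) / (n + 1) ≤ x + 1 / (n + 1) := by
    rw [div_le_iff₀ (by positivity), add_mul, one_div_mul_cancel (by positivity)]
    exact (Int.ceil_lt_add_one _).le
  have hlim : Tendsto (fun n : ℕ => x + 1 / ((n : ℝ) + 1)) atTop (𝓝 x) := by
    simpa using tendsto_one_div_add_atTop_nhds_zero_nat.const_add x
  refine tendsto_nhdsWithin_iff.2
    ⟨?_, Eventually.of_forall fun n => ⟨le_min hxb (hlow n), min_le_left _ _⟩⟩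
  exact tendsto_of_tendsto_of_tendsto_of_le_of_le tendsto_const_nhds hlim
    (fun n => le_min hxb (hlow n)) fun n => (min_le_right _ _).trans (hup n)

theorem aemeasurable_restrict_Icc_of_continuousWithinAt {β : Type*} [TopologicalSpace β]
    [TopologicalSpace.PseudoMetrizableSpace β] [MeasurableSpace β] [BorelSpace β]
    {a b : ℝ} {g : ℝ → β} (μ : Measure ℝ) (hgr : ∀ x ∈ Icc a b, ContinuousWithinAt g (Icc x b) x) :
    AEMeasurable g (μ.restrict (Icc a b)) := by
  refine aemeasurable_of_tendsto_metrizable_ae'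
    (f := fun (n : ℕ) (x : ℝ) => g (min b (⌈x * (n + 1)⌉ / (n + 1)))) (fun n => ?_) ?_
  · exact ((measurable_of_countable fun k : ℤ => g (min b ((k : ℝ) / ((n : ℝ) + 1)))).comp
      (Int.measurable_ceil.comp (measurable_id.mul_const ((n : ℝ) + 1)))).aemeasurable
  · exact (ae_restrict_iff' measurableSet_Icc).2 (Eventually.of_forall fun x hx =>
      (hgr x hx).tendsto.comp (tendsto_min_ceil_mul_div hx.2))

theorem integrableOn_Icc_of_tendsto_nhdsWithin {E : Type*} [NormedAddCommGroup E]
    [MeasurableSpace E] [BorelSpace E] [SecondCountableTopology E]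
    {a b : ℝ} {g : ℝ → E} (hgr : ∀ x ∈ Icc a b, ContinuousWithinAt g (Icc x b) x)
    (hgl : ∀ x ∈ Ioc a b, ∃ l, Tendsto g (𝓝[<] x) (𝓝 l)) :
    IntegrableOn g (Icc a b) := by
  obtain ⟨C, hC⟩ := bddAbove_norm_image_Icc_of_tendsto_nhdsWithin hgr hgl
  exact IntegrableOn.of_bound measure_Icc_lt_top
    (aemeasurable_restrict_Icc_of_continuousWithinAt volume hgr).aestronglyMeasurable C
    (ae_restrict_of_forall_mem measurableSet_Icc fun x hx => hC (mem_image_of_mem _ hx))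

theorem tendsto_setIntegral_Ico_div_of_tendsto_nhdsLT {g : ℝ → ℝ} {t l : ℝ}
    (hgm : StronglyMeasurableAtFilter g (𝓝[≤] t)) (hg : Tendsto g (𝓝[<] t) (𝓝 l)) :
    Tendsto (fun ε => (∫ s in Ico (t - ε) t, g s) / ε) (𝓝[>] 0) (𝓝 l) := by
  -- `{t}` is null, so almost everywhere `𝓝[≤] t` only sees the left limit.
  have hae : Tendsto g (𝓝[≤] t ⊓ ae volume) (𝓝 l) := by
    refine hg.mono_left ?_
    rw [← Iic_sdiff_right, sdiff_eq, nhdsWithin_inter']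
    exact inf_le_inf_left _ (le_principal_iff.2 (compl_mem_ae_iff.2 (measure_singleton t)))
  have hu : Tendsto (fun ε => t - ε) (𝓝[>] 0) (𝓝[≤] t) := by
    refine tendsto_nhdsWithin_iff.2 ⟨?_, eventually_nhdsWithin_of_forall fun ε hε => ?_⟩
    · simpa using tendsto_nhdsWithin_of_tendsto_nhds ((continuous_sub_left t).tendsto 0)
    · exact sub_le_self t (le_of_lt hε)
  have ho := intervalIntegral.integral_sub_linear_isLittleO_of_tendsto_ae hgm hae hu
    (tendsto_const_nhdsWithin (mem_Iic.2 le_rfl))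
  have h := ho.tendsto_div_nhds_zero.add_const l
  rw [zero_add] at h
  refine h.congr' (eventually_nhdsWithin_of_forall fun ε (hε : 0 < ε) => ?_)
  rw [intervalIntegral.integral_of_le (sub_le_self t hε.le), ← integral_Ico_eq_integral_Ioc]
  simp only [Pi.sub_apply, sub_sub_cancel, smul_eq_mul]
  field_simp
  ring

section Fubini

variable {ν μ : Measure ℝ} {g : ℝ → ℝ} {ε : ℝ}

theorem mem_Ico_sub_iff_mem_Ioc_add {s t : ℝ} : s ∈ Ico (t - ε) t ↔ t ∈ Ioc s (s + ε) := by
  simp only [mem_Ico, mem_Ioc, sub_le_iff_le_add]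
  tauto

theorem integrable_indicator_Ioc_prod [IsFiniteMeasure μ] (hg : Integrable g ν) :
    Integrable ({p : ℝ × ℝ | p.2 ∈ Ioc p.1 (p.1 + ε)}.indicator fun p => g p.1) (ν.prod μ) :=
  (hg.comp_fst μ).indicator <| (measurableSet_lt measurable_fst measurable_snd).inter
    (measurableSet_le measurable_snd (measurable_fst.add_const ε))

theorem integral_indicator_Ioc_prod_left (s : ℝ) :
    ∫ t, {p : ℝ × ℝ | p.2 ∈ Ioc p.1 (p.1 + ε)}.indicator (fun p => g p.1) (s, t) ∂μ =
      g s * μ.real (Ioc s (s + ε)) := by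
  rw [mul_comm, ← smul_eq_mul, ← integral_indicator_const (g s) measurableSet_Ioc]
  rfl

theorem integral_indicator_Ioc_prod_right (t : ℝ) :
    ∫ s, {p : ℝ × ℝ | p.2 ∈ Ioc p.1 (p.1 + ε)}.indicator (fun p => g p.1) (s, t) ∂ν =
      ∫ s in Ico (t - ε) t, g s ∂ν := by
  rw [← integral_indicator measurableSet_Ico]
  congr 1 with s
  simp only [indicator_apply, mem_ofPred_eq, mem_Ico_sub_iff_mem_Ioc_add]

theorem integral_mul_measureReal_Ioc [SFinite ν] [IsFiniteMeasure μ] (hg : Integrable g ν) :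
    ∫ s, g s * μ.real (Ioc s (s + ε)) ∂ν = ∫ t, ∫ s in Ico (t - ε) t, g s ∂ν ∂μ := by
  simpa only [integral_indicator_Ioc_prod_left, integral_indicator_Ioc_prod_right] using
    integral_integral_swap (f := fun s t => {p : ℝ × ℝ | p.2 ∈ Ioc p.1 (p.1 + ε)}.indicator
      (fun p => g p.1) (s, t)) (integrable_indicator_Ioc_prod hg)

theorem integrable_mul_measureReal_Ioc [SFinite ν] [IsFiniteMeasure μ] (hg : Integrable g ν) :
    Integrable (fun s => g s * μ.real (Ioc s (s + ε))) ν := by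
  simpa only [integral_indicator_Ioc_prod_left] using
    (integrable_indicator_Ioc_prod (μ := μ) (ε := ε) hg).integral_prod_left

theorem integrable_setIntegral_Ico [SFinite ν] [IsFiniteMeasure μ] (hg : Integrable g ν) :
    Integrable (fun t => ∫ s in Ico (t - ε) t, g s ∂ν) μ := by
  simpa only [integral_indicator_Ioc_prod_right] using
    (integrable_indicator_Ioc_prod (μ := μ) (ε := ε) hg).integral_prod_right

end Fubini

theorem norm_setIntegral_Ico_le {ν : Measure ℝ} {g : ℝ → ℝ} {C ε : ℝ} (hν : ν ≤ volume)
    (hC0 : 0 ≤ C) (hgC : ∀ᵐ s ∂ν, ‖g s‖ ≤ C) (hε : 0 ≤ ε) (t : ℝ) :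
    ‖∫ s in Ico (t - ε) t, g s ∂ν‖ ≤ C * ε := by
  have hfin : ν (Ico (t - ε) t) < ⊤ := (hν _).trans_lt measure_Ico_lt_top
  calc ‖∫ s in Ico (t - ε) t, g s ∂ν‖ ≤ C * ν.real (Ico (t - ε) t) :=
        norm_setIntegral_le_of_norm_le_const_ae hfin (ae_restrict_of_ae hgC)
    _ ≤ C * volume.real (Ico (t - ε) t) := by
        gcongr
        exact ENNReal.toReal_mono measure_Ico_lt_top.ne (hν _)
    _ = C * ε := by simp [Real.volume_real_Ico, hε]

theorem tendsto_integral_mul_measureReal_Ioc_div {a b C : ℝ} {g gl : ℝ → ℝ} (hab : a < b)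
    (μ : Measure ℝ) [IsFiniteMeasure μ] (hμ : ∀ᵐ t ∂μ, t ∈ Ioc a b)
    (hg : IntegrableOn g (Ioc a b)) (hgC : ∀ s ∈ Ioc a b, ‖g s‖ ≤ C)
    (hgl : ∀ t ∈ Ioc a b, Tendsto g (𝓝[<] t) (𝓝 (gl t))) :
    Tendsto (fun ε => ∫ s in Ioc a b, g s * μ.real (Ioc s (s + ε)) / ε) (𝓝[>] 0)
      (𝓝 (∫ t, gl t ∂μ)) := by
  set ν := volume.restrict (Ioc a b)
  have hC0 : 0 ≤ C := (norm_nonneg _).trans (hgC b ⟨hab, le_rfl⟩)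
  have hgC' : ∀ᵐ s ∂ν, ‖g s‖ ≤ C := ae_restrict_of_forall_mem measurableSet_Ioc hgC
  have hfubini (ε : ℝ) : ∫ s in Ioc a b, g s * μ.real (Ioc s (s + ε)) / ε =
      ∫ t, (∫ s in Ico (t - ε) t, g s ∂ν) / ε ∂μ := by
    rw [integral_div, integral_div, integral_mul_measureReal_Ioc hg]
  refine Tendsto.congr (fun ε => (hfubini ε).symm) ?_
  refine tendsto_integral_filter_of_dominated_convergence (fun _ => C)
    (Eventually.of_forall fun ε =>
      ((integrable_setIntegral_Ico hg).div_const ε).aestronglyMeasurable)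
    ?_ (integrable_const C) ?_
  · filter_upwards [self_mem_nhdsWithin] with ε (hε : 0 < ε)
    refine Eventually.of_forall fun t => ?_
    rw [norm_div, Real.norm_of_nonneg hε.le, div_le_iff₀ hε]
    exact norm_setIntegral_Ico_le Measure.restrict_le_self hC0 hgC' hε.le t
  · filter_upwards [hμ] with t ht
    refine (tendsto_setIntegral_Ico_div_of_tendsto_nhdsLT
      ⟨Ioc a b, Ioc_mem_nhdsLE_of_mem ht, hg.aestronglyMeasurable⟩ (hgl t ht)).congr' ?_
    filter_upwards [Ioo_mem_nhdsGT (sub_pos.2 ht.1)] with ε hε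
    rw [Measure.restrict_restrict measurableSet_Ico, inter_eq_left.2]
    exact fun s hs => ⟨by linarith [hε.2, hs.1], hs.2.le.trans ht.2⟩

theorem extendJbar_of_le {a b x : ℝ} {f : ℝ → ℝ} (hx : a ≤ x) :
    extendJbar a b f x = f (min x b) := by
  rw [extendJbar, if_neg hx.not_gt]
  split_ifs with hxb
  · rw [min_eq_left hxb]
  · rw [min_eq_right (not_le.1 hxb).le]

theorem StieltjesFunction.measureReal_restrict_Ioc (F : StieltjesFunction ℝ) {a b s t : ℝ}
    (has : a ≤ s) (hsb : s ≤ b) (hst : s ≤ t) :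
    (F.measure.restrict (Ioc a b)).real (Ioc s t) = F (min t b) - F s := by
  rw [measureReal_restrict_apply measurableSet_Ioc, Ioc_inter_Ioc, max_eq_left has,
    measureReal_def, F.measure_Ioc,
    ENNReal.toReal_ofReal (sub_nonneg.2 (F.mono (le_min hst hsb)))]

instance StieltjesFunction.isFiniteMeasure_restrict_Ioc (F : StieltjesFunction ℝ) (a b : ℝ) :
    IsFiniteMeasure (F.measure.restrict (Ioc a b)) :=
  isFiniteMeasure_restrict.2 measure_Ioc_lt_top.ne

theorem extendJbar_add_sub_eq {a b s ε : ℝ} {f : ℝ → ℝ} {F₁ F₂ : StieltjesFunction ℝ}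
    (hf : ∀ x ∈ Icc a b, f x = F₁ x - F₂ x) (hs : s ∈ Ioc a b) (hε : 0 ≤ ε) :
    extendJbar a b f (s + ε) - extendJbar a b f s =
      (F₁.measure.restrict (Ioc a b)).real (Ioc s (s + ε)) -
        (F₂.measure.restrict (Ioc a b)).real (Ioc s (s + ε)) := by
  have hsε : s ≤ s + ε := le_add_of_nonneg_right hε
  rw [extendJbar_of_le (hs.1.le.trans hsε), extendJbar_of_le hs.1.le, min_eq_left hs.2,
    F₁.measureReal_restrict_Ioc hs.1.le hs.2 hsε, F₂.measureReal_restrict_Ioc hs.1.le hs.2 hsε,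
    hf _ ⟨hs.1.le.trans (le_min hsε hs.2), min_le_right _ _⟩, hf s (Ioc_subset_Icc_self hs)]
  ring

/-- **Forward integral against a càdlàg bounded variation function.**
Let `f` be a càdlàg function of bounded variation on `[a,b]`, written as the difference
`f = F₁ - F₂` on `[a,b]` of two nondecreasing right-continuous (Stieltjes) functions,
so that the associated Lebesgue–Stieltjes measure `df` satisfies
`df(]a,x]) = f(x) - f(a)`.  Let `g` be càdlàg on `[a,b]`, with left limits `gl s = g(s⁻)`
for `s ∈ ]a,b]`.  Then the deterministic forward integral `∫_{]a,b]} g d⁻f` exists,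
i.e. `limit_{ε→0⁺} ∫_a^b g(s) (f_{J̄}(s+ε) - f_{J̄}(s))/ε ds` exists, and it equals the
Lebesgue–Stieltjes integral `∫_{]a,b]} g(s⁻) df(s)`. -/
theorem forward_integral_eq_stieltjes
    (a b : ℝ) (hab : a < b) (f g gl : ℝ → ℝ)
    (F₁ F₂ : StieltjesFunction ℝ)
    (hf : ∀ x ∈ Set.Icc a b, f x = F₁ x - F₂ x)
    (hg_right : ∀ s ∈ Set.Ico a b, Tendsto g (𝓝[Set.Ioc s b] s) (𝓝 (g s)))
    (hg_left : ∀ s ∈ Set.Ioc a b, Tendsto g (𝓝[Set.Ioo a s] s) (𝓝 (gl s))) :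
    Tendsto (fun ε : ℝ =>
        ∫ s in a..b, g s * (extendJbar a b f (s + ε) - extendJbar a b f s) / ε)
      (𝓝[>] 0)
      (𝓝 ((∫ s in Set.Ioc a b, gl s ∂F₁.measure)
            - ∫ s in Set.Ioc a b, gl s ∂F₂.measure)) := by
  have hgr (x : ℝ) (hx : x ∈ Icc a b) : ContinuousWithinAt g (Icc x b) x := by
    rcases hx.2.lt_or_eq with hxb | rfl
    · rw [← Ioc_insert_left hx.2]
      exact continuousWithinAt_insert_self.2 (hg_right x ⟨hx.1, hxb⟩)
    · simp
  have hgl (t : ℝ) (ht : t ∈ Ioc a b) : Tendsto g (𝓝[<] t) (𝓝 (gl t)) :=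
    nhdsWithin_Ioo_eq_nhdsLT ht.1 ▸ hg_left t ht
  have hgl' (t : ℝ) (ht : t ∈ Ioc a b) : ∃ l, Tendsto g (𝓝[<] t) (𝓝 l) := ⟨_, hgl t ht⟩
  obtain ⟨C, hC⟩ := bddAbove_norm_image_Icc_of_tendsto_nhdsWithin hgr hgl'
  have hgC (s : ℝ) (hs : s ∈ Ioc a b) : ‖g s‖ ≤ C :=
    hC (mem_image_of_mem _ (Ioc_subset_Icc_self hs))
  have hg := (integrableOn_Icc_of_tendsto_nhdsWithin hgr hgl').mono_set Ioc_subset_Icc_self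
  have key (F : StieltjesFunction ℝ) := tendsto_integral_mul_measureReal_Ioc_div hab
    (F.measure.restrict (Ioc a b)) (ae_restrict_mem measurableSet_Ioc) hg hgC hgl
  refine ((key F₁).sub (key F₂)).congr' ?_
  filter_upwards [self_mem_nhdsWithin] with ε (hε : 0 < ε)
  have hint (F : StieltjesFunction ℝ) :=
    (integrable_mul_measureReal_Ioc (μ := F.measure.restrict (Ioc a b)) (ε := ε) hg).div_const ε
  rw [intervalIntegral.integral_of_le hab.le, ← integral_sub (hint F₁) (hint F₂)]
  refine setIntegral_congr_fun measurableSet_Ioc fun s hs => ?_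
  rw [extendJbar_add_sub_eq hf hs hε.le]
  ring
end
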